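/- arXiv:1201.0405 — 3 statements merged into one kernel-verified Lean document; each statement's English description precedes it below -/
import Mathlib

section
/- Given any instance Nim−F of CIS-Nim, let F_max be the largest heap size appearing in any position of F. If {x,y,z} is a P-position of Nim−F with z > 2·F_max + |F|, then z ≤ x + y. -/
open Filter

/-- A move in Nim: strictly decrease one heap. -/
def NimMove (a b : Multiset ℕ) : Prop :=
  ∃ x y, x ∈ a ∧ y < x ∧ b = y ::ₘ a.erase x

theorem NimMove.sum_lt {a b : Multiset ℕ} (h : NimMove a b) : b.sum < a.sum := by
  obtain ⟨x, y, hx, hyx, rfl⟩ := h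
  have hc : x ::ₘ a.erase x = a := Multiset.cons_erase hx
  have h1 : (y ::ₘ a.erase x).sum = y + (a.erase x).sum := Multiset.sum_cons y _
  have h2 : a.sum = x + (a.erase x).sum := by
    conv_lhs => rw [← hc]
    exact Multiset.sum_cons x _
  omega

/-- P-positions of Nim minus a forbidden finite set `F`, by the standard recursion:
a position is P iff every child not in `F` is an N-position. -/
def NimP (F : Finset (Multiset ℕ)) (a : Multiset ℕ) : Prop :=
  ∀ b, NimMove a b → b ∉ F → ¬ NimP F b
termination_by a.sum
decreasing_by exact NimMove.sum_lt (by assumption)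

/-- A P-position of Nim−F : a valid position (not forbidden) which is P. -/
def PPos (F : Finset (Multiset ℕ)) (a : Multiset ℕ) : Prop :=
  a ∉ F ∧ NimP F a

/-- Largest heap size appearing in any forbidden position. -/
def Fmax (F : Finset (Multiset ℕ)) : ℕ := F.sup Multiset.sup

/-- The set S of pairs (x,y) such that there is z with z < y < x and {x,y,z} a P-position. -/
def Sset (F : Finset (Multiset ℕ)) : Set (ℕ × ℕ) :=
  {p | ∃ z, z < p.2 ∧ p.2 < p.1 ∧ PPos F {p.1, p.2, z}}

/-- r(x,y): number of elements of S of the form (x',y) with x' ≥ x. -/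
noncomputable def rdef (F : Finset (Multiset ℕ)) (x y : ℕ) : ℕ :=
  {x' | x ≤ x' ∧ (x', y) ∈ Sset F}.ncard

/-- b(x,y): number of elements of S of the form (x,y') with y' ≤ y. -/
noncomputable def bdef (F : Finset (Multiset ℕ)) (x y : ℕ) : ℕ :=
  {y' | y' ≤ y ∧ (x, y') ∈ Sset F}.ncard

/-- U_{x,y} = A ∪ B ∪ C ∪ D. -/
def Uset (F : Finset (Multiset ℕ)) (x y : ℕ) : Set (ℕ × ℕ) :=
  {p | (p.2 < p.1 ∧ p.1 ≤ x ∧ bdef F p.1 p.1 ≥ p.1 - p.2) ∨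
       (p.1 = x ∧ p.2 < y ∧ bdef F x (y - 1) ≥ y - p.2) ∨
       (y ≤ p.2 ∧ p.2 < x ∧ x ≤ p.1 ∧ rdef F x p.2 > p.1 - x) ∨
       (p.2 < y ∧ y ≤ x ∧ x < p.1 ∧ rdef F (x + 1) p.2 > p.1 - (x + 1))}

/-- Ū_{x,y}: agrees with U_{x,y} for second coordinate < x, and for y' ≥ x contains
(x',y') iff y' < x' ≤ 2y' and (y', ⌊x'/2⌋) ∉ Ū_{x,y}. -/
def Ubar (F : Finset (Multiset ℕ)) (x y : ℕ) (p : ℕ × ℕ) : Prop :=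
  if p.2 < x then p ∈ Uset F x y
  else if h : p.2 < p.1 then p.1 ≤ 2 * p.2 ∧ ¬ Ubar F x y (p.2, p.1 / 2)
  else False
termination_by p.1
decreasing_by exact h

/-- S_n = Ū_{n,0}. -/
def Sn (F : Finset (Multiset ℕ)) (n : ℕ) : Set (ℕ × ℕ) := {p | Ubar F n 0 p}

/-- R_n = {(x,y) : y < n ≤ x ≤ 2y}. -/
def Rn (n : ℕ) : Set (ℕ × ℕ) := {p | p.2 < n ∧ n ≤ p.1 ∧ p.1 ≤ 2 * p.2}

/-- h(m,n) = |R_n ∩ S_m|. -/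
noncomputable def hdef (F : Finset (Multiset ℕ)) (m n : ℕ) : ℕ := (Rn n ∩ Sn F m).ncard

/-- π(n): number of P-positions (unordered multisets) with all entries < n. -/
noncomputable def piNim (F : Finset (Multiset ℕ)) (n : ℕ) : ℕ :=
  {s : Multiset ℕ | s.card = 3 ∧ (∀ a ∈ s, a < n) ∧ PPos F s}.ncard

lemma rot3 (a b c : ℕ) : ({a, b, c} : Multiset ℕ) = c ::ₘ {a, b} := by
  simp only [Multiset.insert_eq_cons, ← Multiset.cons_zero]
  rw [Multiset.cons_swap b c, Multiset.cons_swap a c]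

lemma mid3 (a b c : ℕ) : ({a, b, c} : Multiset ℕ) = b ::ₘ {a, c} := by
  simp only [Multiset.insert_eq_cons]
  rw [Multiset.cons_swap a b]

lemma rot3' (a b c : ℕ) : a ::ₘ ({b, c} : Multiset ℕ) = c ::ₘ {a, b} := by
  rw [← Multiset.insert_eq_cons]; exact rot3 a b c

theorem NimP_iff (F : Finset (Multiset ℕ)) (a : Multiset ℕ) :
    NimP F a ↔ ∀ b, NimMove a b → b ∉ F → ¬ NimP F b := by
  rw [NimP]

theorem not_NimP_iff (F : Finset (Multiset ℕ)) (a : Multiset ℕ) :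
    ¬ NimP F a ↔ ∃ b, NimMove a b ∧ b ∉ F ∧ NimP F b := by
  rw [NimP_iff F a]; push_neg; rfl

lemma not_both (F : Finset (Multiset ℕ)) (s : Multiset ℕ) {c c' : ℕ} (h : c' < c)
    (h1 : NimP F (c ::ₘ s)) (h2 : c' ::ₘ s ∉ F) (h3 : NimP F (c' ::ₘ s)) : False := by
  have mv : NimMove (c ::ₘ s) (c' ::ₘ s) :=
    ⟨c, c', Multiset.mem_cons_self c s, h, by rw [Multiset.erase_cons_head]⟩
  exact (NimP_iff F _).mp h1 _ mv h2 h3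

/-- If {x,y,z} is a P-position of Nim−F with z > 2·F_max + |F|, then z ≤ x + y. -/
theorem P_large_entry_le_sum (F : Finset (Multiset ℕ)) (x y z : ℕ)
    (hP : PPos F {x, y, z}) (hz : z > 2 * Fmax F + F.card) : z ≤ x + y := by
  classical
  obtain ⟨hF, hN⟩ := hP
  by_contra hlt
  push_neg at hlt
  set S : Finset ℕ := (Finset.range z).filter (fun t => ({x, y, t} : Multiset ℕ) ∈ F) with hS
  set T : Finset ℕ :=
    (Finset.range z).filter (fun t => ¬ (({x, y, t} : Multiset ℕ) ∈ F)) with hT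
  have hmv : ∀ v, v < z → NimMove {x, y, z} (v ::ₘ {x, y}) := by
    intro v hv
    refine ⟨z, v, ?_, hv, ?_⟩
    · rw [rot3]; exact Multiset.mem_cons_self _ _
    · rw [rot3 x y z, Multiset.erase_cons_head]
  have hstep : ∀ t ∈ T, ∃ q : Bool × ℕ,
      q.2 < (bif q.1 then y else x) ∧
      ((t ::ₘ {q.2, bif q.1 then x else y}) ∉ F) ∧
      NimP F (t ::ₘ {q.2, bif q.1 then x else y}) := by
    intro t ht
    rw [hT, Finset.mem_filter, Finset.mem_range] at ht
    have hNt : ¬ NimP F {x, y, t} := by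
      have := (NimP_iff F _).mp hN (t ::ₘ {x, y}) (hmv t ht.1)
      rw [← rot3] at this
      exact this ht.2
    rw [not_NimP_iff] at hNt
    obtain ⟨b, ⟨u, v, hu, hvu, rfl⟩, hbF, hbP⟩ := hNt
    have hu' : u = x ∨ u = y ∨ u = t := by simpa using hu
    rcases hu' with rfl | rfl | rfl
    · -- reduced x
      have e : v ::ₘ (({u, y, t} : Multiset ℕ).erase u) = t ::ₘ {v, y} := by
        rw [show ({u, y, t} : Multiset ℕ) = u ::ₘ {y, t} from
          (Multiset.insert_eq_cons u _), Multiset.erase_cons_head, rot3']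
      rw [e] at hbF hbP
      exact ⟨(false, v), hvu, hbF, hbP⟩
    · -- reduced y
      have e : v ::ₘ (({x, u, t} : Multiset ℕ).erase u) = t ::ₘ {v, x} := by
        rw [mid3, Multiset.erase_cons_head, rot3']
      rw [e] at hbF hbP
      exact ⟨(true, v), hvu, hbF, hbP⟩
    · -- reduced t : contradiction with NimP {x,y,z}
      have e : v ::ₘ (({x, y, u} : Multiset ℕ).erase u) = v ::ₘ {x, y} := by
        rw [rot3, Multiset.erase_cons_head]
      rw [e] at hbF hbP
      exact (((NimP_iff F _).mp hN _ (hmv v (lt_trans hvu ht.1)) hbF) hbP).elim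
  choose! q hq1 hq2 hq3 using hstep
  have hinj : Set.InjOn q ↑T := by
    intro t1 h1 t2 h2 heq
    simp only [Finset.mem_coe] at h1 h2
    rcases lt_trichotomy t1 t2 with h | h | h
    · have h3 := hq3 t2 h2
      rw [← heq] at h3
      exact (not_both F _ h h3 (hq2 t1 h1) (hq3 t1 h1)).elim
    · exact h
    · have h3 := hq3 t1 h1
      rw [heq] at h3
      exact (not_both F _ h h3 (hq2 t2 h2) (hq3 t2 h2)).elim
  set target : Finset (Bool × ℕ) :=
    ((Finset.range x).image fun v => ((false : Bool), v)) ∪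
    ((Finset.range y).image fun v => ((true : Bool), v)) with htarget
  have hmaps : ∀ t ∈ T, q t ∈ target := by
    intro t ht
    have h1 := hq1 t ht
    cases hb : (q t).1 with
    | false =>
      refine Finset.mem_union.mpr (Or.inl ?_)
      rw [Finset.mem_image]
      refine ⟨(q t).2, Finset.mem_range.mpr (by simpa [hb] using h1), ?_⟩
      rw [← hb]
    | true =>
      refine Finset.mem_union.mpr (Or.inr ?_)
      rw [Finset.mem_image]
      refine ⟨(q t).2, Finset.mem_range.mpr (by simpa [hb] using h1), ?_⟩
      rw [← hb]
  have hTcard : T.card ≤ x + y := by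
    calc T.card ≤ target.card := Finset.card_le_card_of_injOn q hmaps hinj
    _ ≤ x + y := by
        refine le_trans (Finset.card_union_le _ _) ?_
        have h1 := Finset.card_image_le (s := Finset.range x) (f := fun v => ((false : Bool), v))
        have h2 := Finset.card_image_le (s := Finset.range y) (f := fun v => ((true : Bool), v))
        simp only [Finset.card_range] at h1 h2
        omega
  have hScard : S.card ≤ F.card := by
    refine Finset.card_le_card_of_injOn (fun t => ({x, y, t} : Multiset ℕ))
      (fun t ht => (Finset.mem_filter.mp ht).2) ?_
    intro t1 _ t2 _ h
    have := congrArg Multiset.sum h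
    simp only [Multiset.insert_eq_cons, Multiset.sum_cons, Multiset.sum_singleton] at this
    omega
  have hsplit : S.card + T.card = z := by
    have := Finset.card_filter_add_card_filter_not
      (s := Finset.range z) (p := fun t => ({x, y, t} : Multiset ℕ) ∈ F)
    rw [Finset.card_range] at this
    rw [hS, hT]
    exact this
  rcases Finset.eq_empty_or_nonempty S with hSe | ⟨t0, ht0⟩
  · rw [hSe] at hsplit
    simp at hsplit
    omega
  · have ht0' : ({x, y, t0} : Multiset ℕ) ∈ F := (Finset.mem_filter.mp ht0).2
    have hxm : x ≤ Fmax F :=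
      le_trans (Multiset.le_sup (by simp)) (Finset.le_sup ht0')
    have hym : y ≤ Fmax F :=
      le_trans (Multiset.le_sup (by simp)) (Finset.le_sup ht0')
    omega
end

section
/- For ordinary three-heap Nim, let π(x) denote the number of P-positions {a,b,c} (as unordered multisets) with a, b, c all less than x. Then π(x) = (3x² − 6xy + 4y² + 3x + 2)/6, where y is the greatest power of 2 less than or equal to x (for x ≥ 1). -/
open Filter

/-!
By Bouton's theorem the P-positions with all heaps below `x` are the multisets
`{a, b, a ^^^ b}` for the pairs `(a, b) ∈ [0, x)²` with `a ^^^ b < x`. Write `x = y + r` with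
`y = 2 ^ k` and `r ≤ y`. Pairs with both entries in `[0, y)` or both in `[y, x)` all qualify
(`y² + r²` of them), while a mixed pair `(a, y + s)` or `(y + s, a)` with `a < y` qualifies
iff `a ^^^ s < r`, and `(a, s) ↦ (a ^^^ s, s)` matches these with `[0, r)²`; so there are
`y² + 3 r²` pairs.
A position with three distinct heaps comes from exactly `6` pairs (its ordered pairs of
distinct entries), and the remaining positions `{a, a, 0}`, `a < x`, come from `3 x - 2` pairs
in total, whence `6 π(x) = y² + 3 r² + 3 x + 2`.
-/

open Finset

lemma nimP_empty_iff {s : Multiset ℕ} : NimP ∅ s ↔ ∀ t, NimMove s t → ¬ NimP ∅ t := by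
  rw [NimP]
  simp

lemma nimMove_triple_iff {a b c : ℕ} {t : Multiset ℕ} :
    NimMove {a, b, c} t ↔
      (∃ a' < a, t = {a', b, c}) ∨ (∃ b' < b, t = {a, b', c}) ∨
        (∃ c' < c, t = {a, b, c'}) := by
  have hb : ({a, b, c} : Multiset ℕ) = b ::ₘ {a, c} := Multiset.cons_swap a b {c}
  have hc : ({a, b, c} : Multiset ℕ) = c ::ₘ {a, b} := by
    simp only [Multiset.insert_eq_cons, ← Multiset.cons_zero, Multiset.cons_swap]
  have hy (y : ℕ) : ({a, y, c} : Multiset ℕ) = y ::ₘ {a, c} := Multiset.cons_swap a y {c}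
  have hy' (y : ℕ) : ({a, b, y} : Multiset ℕ) = y ::ₘ {a, b} := by
    simp only [Multiset.insert_eq_cons, ← Multiset.cons_zero, Multiset.cons_swap]
  constructor
  · rintro ⟨x, y, hx, hxy, rfl⟩
    simp only [Multiset.insert_eq_cons, Multiset.mem_cons, Multiset.mem_singleton] at hx
    rcases hx with rfl | rfl | rfl
    · exact Or.inl ⟨y, hxy, by simp⟩
    · exact Or.inr (Or.inl ⟨y, hxy, by rw [hb, Multiset.erase_cons_head, hy]⟩)
    · exact Or.inr (Or.inr ⟨y, hxy, by rw [hc, Multiset.erase_cons_head, hy']⟩)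
  · rintro (⟨y, hya, rfl⟩ | ⟨y, hyb, rfl⟩ | ⟨y, hyc, rfl⟩)
    · exact ⟨a, y, by simp, hya, by simp⟩
    · exact ⟨b, y, by simp, hyb, by rw [hb, Multiset.erase_cons_head, hy]⟩
    · exact ⟨c, y, by simp, hyc, by rw [hc, Multiset.erase_cons_head, hy']⟩

theorem nimP_empty_triple_iff (a b c : ℕ) : NimP ∅ {a, b, c} ↔ a ^^^ b ^^^ c = 0 := by
  induction h : a + b + c using Nat.strong_induction_on generalizing a b c with
  | _ n ih =>
    subst h
    rw [nimP_empty_iff]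
    constructor
    · intro hP
      by_contra hne
      rcases Nat.xor_trichotomy hne with hlt | hlt | hlt
      · refine hP _ (nimMove_triple_iff.2 (Or.inl ⟨_, hlt, rfl⟩)) ?_
        exact (ih _ (by omega) _ _ _ rfl).2 (by simp)
      · refine hP _ (nimMove_triple_iff.2 (Or.inr (Or.inl ⟨_, hlt, rfl⟩))) ?_
        exact (ih _ (by omega) _ _ _ rfl).2 (by simp [Nat.xor_comm])
      · refine hP _ (nimMove_triple_iff.2 (Or.inr (Or.inr ⟨_, hlt, rfl⟩))) ?_
        exact (ih _ (by omega) _ _ _ rfl).2 (by simp)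
    · intro hzero t ht
      rcases nimMove_triple_iff.1 ht with ⟨y, hy, rfl⟩ | ⟨y, hy, rfl⟩ | ⟨y, hy, rfl⟩
      all_goals
        rw [ih _ (by omega) _ _ _ rfl]
        intro hzero'
        rw [← hzero'] at hzero
        simp only [Nat.xor_left_inj, Nat.xor_right_inj] at hzero
        omega

def xorPairs (x : ℕ) : Finset (ℕ × ℕ) := {p ∈ range x ×ˢ range x | p.1 ^^^ p.2 < x}

def xorTriple (p : ℕ × ℕ) : Multiset ℕ := {p.1, p.2, p.1 ^^^ p.2}

lemma mem_xorPairs {x : ℕ} {p : ℕ × ℕ} :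
    p ∈ xorPairs x ↔ ∀ a ∈ xorTriple p, a < x := by
  simp [xorPairs, xorTriple, and_assoc]

lemma setOf_pPos_empty_eq_image (x : ℕ) :
    {s : Multiset ℕ | s.card = 3 ∧ (∀ a ∈ s, a < x) ∧ PPos ∅ s} =
      ((xorPairs x).image xorTriple : Set (Multiset ℕ)) := by
  ext s
  simp only [Set.mem_ofPred_eq, coe_image, Set.mem_image, mem_coe, PPos, notMem_empty,
    not_false_eq_true, true_and]
  constructor
  · rintro ⟨hcard, hlt, hP⟩
    obtain ⟨a, b, c, rfl⟩ := Multiset.card_eq_three.1 hcard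
    have hc : c = a ^^^ b := by
      rw [nimP_empty_triple_iff, Nat.xor_eq_zero_iff] at hP
      exact hP.symm
    subst hc
    exact ⟨(a, b), mem_xorPairs.2 hlt, rfl⟩
  · rintro ⟨p, hp, rfl⟩
    exact ⟨rfl, mem_xorPairs.1 hp, (nimP_empty_triple_iff _ _ _).2 (by simp)⟩

namespace Nat

lemma xor_eq_two_pow_mul_add (a b k : ℕ) :
    a ^^^ b = 2 ^ k * (a / 2 ^ k ^^^ b / 2 ^ k) + (a % 2 ^ k ^^^ b % 2 ^ k) := by
  rw [← Nat.xor_div_two_pow, ← Nat.xor_mod_two_pow, Nat.div_add_mod]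

lemma xor_two_pow_add {a s k : ℕ} (ha : a < 2 ^ k) (hs : s < 2 ^ k) :
    a ^^^ (2 ^ k + s) = 2 ^ k + (a ^^^ s) := by
  rw [xor_eq_two_pow_mul_add _ _ k]
  simp [Nat.div_eq_of_lt ha, Nat.mod_eq_of_lt ha, Nat.mod_eq_of_lt hs, Nat.add_div_left, hs]

lemma two_pow_add_xor_two_pow_add {t s k : ℕ} (ht : t < 2 ^ k) (hs : s < 2 ^ k) :
    (2 ^ k + t) ^^^ (2 ^ k + s) = t ^^^ s := by
  rw [xor_eq_two_pow_mul_add _ _ k]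
  simp [Nat.div_eq_of_lt ht, Nat.div_eq_of_lt hs, Nat.mod_eq_of_lt ht, Nat.mod_eq_of_lt hs,
    Nat.add_div_left]

end Nat

lemma card_filter_xor_lt_eq_mul_self {r k : ℕ} (hr : r ≤ 2 ^ k) :
    #{p ∈ range (2 ^ k) ×ˢ range r | p.1 ^^^ p.2 < r} = r * r := by
  rw [show r * r = #(range r ×ˢ range r) by simp]
  refine card_nbij' (fun p ↦ (p.1 ^^^ p.2, p.2)) (fun p ↦ (p.1 ^^^ p.2, p.2)) ?_ ?_ ?_ ?_
  · intro p hp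
    simp only [coe_filter, coe_product, coe_range, mem_product, mem_range] at hp ⊢
    exact ⟨hp.2, hp.1.2⟩
  · rintro ⟨d, s⟩ hp
    obtain ⟨hd, hs⟩ : d < r ∧ s < r := by simpa using hp
    simp only [coe_filter, mem_product, mem_range]
    exact ⟨⟨Nat.xor_lt_two_pow (by omega) (by omega), hs⟩, by simpa using hd⟩
  all_goals intro p _; simp

lemma card_xorPairs_two_pow_add {r k : ℕ} (hr : r ≤ 2 ^ k) :
    #(xorPairs (2 ^ k + r)) = 2 ^ k * 2 ^ k + 3 * (r * r) := by
  set y := 2 ^ k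
  have low_low {a b : ℕ} (ha : a ∈ range y) (hb : b ∈ range y) : a ^^^ b < y + r := by
    have := Nat.xor_lt_two_pow (mem_range.1 ha) (mem_range.1 hb)
    omega
  have low_high {a s : ℕ} (ha : a ∈ range y) (hs : s ∈ range r) :
      a ^^^ (y + s) < y + r ↔ a ^^^ s < r := by
    rw [Nat.xor_two_pow_add (mem_range.1 ha) ((mem_range.1 hs).trans_le hr)]
    omega
  have high_high {t s : ℕ} (ht : t ∈ range r) (hs : s ∈ range r) :
      (y + t) ^^^ (y + s) < y + r := by
    simp only [mem_range] at ht hs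
    rw [Nat.two_pow_add_xor_two_pow_add (by omega) (by omega)]
    have := Nat.xor_lt_two_pow (show t < y by omega) (show s < y by omega)
    omega
  have block_ll :
      ∑ a ∈ range y, ∑ b ∈ range y, (if a ^^^ b < y + r then 1 else 0) = y * y := by
    simp +contextual [low_low]
  have block_lh :
      ∑ a ∈ range y, ∑ s ∈ range r, (if a ^^^ (y + s) < y + r then 1 else 0) = r * r := by
    rw [← card_filter_xor_lt_eq_mul_self hr, card_filter, sum_product]
    exact sum_congr rfl fun a ha ↦ sum_congr rfl fun s hs ↦ if_congr (low_high ha hs) rfl rfl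
  have block_hl :
      ∑ t ∈ range r, ∑ b ∈ range y, (if (y + t) ^^^ b < y + r then 1 else 0) = r * r := by
    rw [sum_comm, ← block_lh]
    exact sum_congr rfl fun b _ ↦ sum_congr rfl fun t _ ↦ by rw [Nat.xor_comm]
  have block_hh :
      ∑ t ∈ range r, ∑ s ∈ range r, (if (y + t) ^^^ (y + s) < y + r then 1 else 0) =
        r * r := by
    simp +contextual [high_high]
  rw [xorPairs, card_filter, sum_product, sum_range_add]
  simp_rw [sum_range_add]
  rw [sum_add_distrib, sum_add_distrib, block_ll, block_lh, block_hl, block_hh]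
  ring

lemma nodup_xorTriple_iff {p : ℕ × ℕ} :
    (xorTriple p).Nodup ↔ p.1 ≠ p.2 ∧ p.1 ≠ 0 ∧ p.2 ≠ 0 := by
  have h1 : p.1 = p.1 ^^^ p.2 ↔ p.2 = 0 := by rw [eq_comm]; simp
  have h2 : p.2 = p.1 ^^^ p.2 ↔ p.1 = 0 := by rw [eq_comm]; simp
  simp only [xorTriple, Multiset.insert_eq_cons, Multiset.nodup_cons, Multiset.mem_cons,
    Multiset.mem_singleton, Multiset.nodup_singleton, h1, h2]
  tauto

lemma xorTriple_eq_of_mem {p q : ℕ × ℕ} (h1 : q.1 ∈ xorTriple p) (h2 : q.2 ∈ xorTriple p)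
    (hne : q.1 ≠ q.2) : xorTriple q = xorTriple p := by
  obtain ⟨a, b⟩ := p
  obtain ⟨c, d⟩ := q
  simp only [xorTriple, Multiset.insert_eq_cons, Multiset.mem_cons, Multiset.mem_singleton]
    at h1 h2 hne ⊢
  rcases h1 with rfl | rfl | rfl <;> rcases h2 with rfl | rfl | rfl <;>
    simp [← Multiset.cons_zero, Multiset.cons_swap, Nat.xor_comm] at hne ⊢

lemma card_filter_not_nodup_xorPairs (m : ℕ) :
    #{p ∈ xorPairs (m + 1) | ¬(xorTriple p).Nodup} = 3 * m + 1 := by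
  have hdegenerate : {p ∈ xorPairs (m + 1) | ¬(xorTriple p).Nodup} =
      {p ∈ range (m + 1) ×ˢ range (m + 1) | p.1 = p.2 ∨ p.1 = 0 ∨ p.2 = 0} := by
    ext ⟨a, b⟩
    simp only [xorPairs, mem_filter, mem_product, mem_range, nodup_xorTriple_iff]
    constructor
    · rintro ⟨⟨hab, -⟩, hcases⟩
      exact ⟨hab, by tauto⟩
    · rintro ⟨⟨ha, hb⟩, hcases⟩
      refine ⟨⟨⟨ha, hb⟩, ?_⟩, by tauto⟩
      rcases hcases with rfl | rfl | rfl <;> simp only [Nat.xor_self, Nat.zero_xor, Nat.xor_zero] <;>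
        omega
  have row {a : ℕ} (ha : a ∈ range m) : #{b ∈ range (m + 1) | a + 1 = b ∨ b = 0} = 2 := by
    rw [show {b ∈ range (m + 1) | a + 1 = b ∨ b = 0} = {a + 1, 0} by
      ext b
      simp only [mem_range] at ha
      simp only [mem_filter, mem_range, mem_insert, mem_singleton]
      omega]
    simp
  rw [hdegenerate, card_filter, sum_product, sum_range_succ']
  simp only [Nat.add_eq_zero_iff, one_ne_zero, and_false, false_or, sum_boole, Nat.cast_id,
    true_or, or_true, ↓reduceIte, sum_const, card_range, smul_eq_mul, mul_one]
  rw [sum_congr rfl fun a ha ↦ row ha, sum_const, card_range, smul_eq_mul]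
  ring

lemma image_xorTriple_filter_not_nodup (x : ℕ) :
    {p ∈ xorPairs x | ¬(xorTriple p).Nodup}.image xorTriple =
      (range x).image fun a ↦ xorTriple (a, a) := by
  ext s
  simp only [mem_image, mem_filter, mem_range, nodup_xorTriple_iff]
  constructor
  · rintro ⟨⟨a, b⟩, ⟨hp, hdeg⟩, rfl⟩
    have hab := mem_xorPairs.1 hp
    simp only [xorTriple, Multiset.insert_eq_cons, Multiset.mem_cons, Multiset.mem_singleton,
      forall_eq_or_imp, forall_eq] at hab
    by_cases h : a = b
    · subst h
      exact ⟨a, hab.1, rfl⟩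
    · obtain rfl | rfl : a = 0 ∨ b = 0 := by tauto
      · exact ⟨b, hab.2.1, by simp [xorTriple, ← Multiset.cons_zero, Multiset.cons_swap]⟩
      · exact ⟨a, hab.1, by simp [xorTriple, ← Multiset.cons_zero, Multiset.cons_swap]⟩
  · rintro ⟨a, ha, rfl⟩
    refine ⟨(a, a), ⟨?_, by simp⟩, rfl⟩
    simpa [xorPairs, ha] using Nat.zero_lt_of_lt ha

lemma card_image_xorTriple_filter_not_nodup (x : ℕ) :
    #({p ∈ xorPairs x | ¬(xorTriple p).Nodup}.image xorTriple) = x := by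
  rw [image_xorTriple_filter_not_nodup, card_image_of_injective _ ?_, card_range]
  intro a b hab
  have := congrArg Multiset.sum hab
  simp only [xorTriple, Nat.xor_self, Multiset.insert_eq_cons, Multiset.sum_cons,
    Multiset.sum_singleton, add_zero] at this
  omega

lemma card_filter_nodup_xorPairs (x : ℕ) :
    #{p ∈ xorPairs x | (xorTriple p).Nodup} =
      6 * #({p ∈ xorPairs x | (xorTriple p).Nodup}.image xorTriple) := by
  set A := {p ∈ xorPairs x | (xorTriple p).Nodup}
  rw [card_eq_sum_card_image xorTriple A, mul_comm, ← smul_eq_mul, ← sum_const]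
  refine sum_congr rfl fun s hs ↦ ?_
  obtain ⟨p, hp, rfl⟩ := mem_image.1 hs
  rw [mem_filter] at hp
  have hfiber : {q ∈ A | xorTriple q = xorTriple p} = (xorTriple p).toFinset.offDiag := by
    ext q
    simp only [A, mem_filter, mem_offDiag, Multiset.mem_toFinset]
    constructor
    · rintro ⟨⟨-, hnd⟩, hq⟩
      rw [← hq]
      exact ⟨by simp [xorTriple], by simp [xorTriple], (nodup_xorTriple_iff.1 hnd).1⟩
    · rintro ⟨h1, h2, hne⟩
      have hq := xorTriple_eq_of_mem h1 h2 hne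
      exact ⟨⟨mem_xorPairs.2 (hq ▸ mem_xorPairs.1 hp.1), hq ▸ hp.2⟩, hq⟩
  rw [hfiber, offDiag_card, Multiset.toFinset_card_of_nodup hp.2]
  rfl

lemma six_mul_card_image_xorTriple {x : ℕ} (hx : 0 < x) :
    6 * #((xorPairs x).image xorTriple) = #(xorPairs x) + 3 * x + 2 := by
  obtain ⟨m, rfl⟩ := Nat.exists_eq_add_one_of_ne_zero hx.ne'
  have hsplit_image := card_filter_add_card_filter_not (s := (xorPairs (m + 1)).image xorTriple)
    Multiset.Nodup
  rw [filter_image, filter_image] at hsplit_image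
  have hsplit := card_filter_add_card_filter_not (s := xorPairs (m + 1))
    fun p ↦ (xorTriple p).Nodup
  have h6 := card_filter_nodup_xorPairs (m + 1)
  have hdeg := card_filter_not_nodup_xorPairs m
  have hdegimg := card_image_xorTriple_filter_not_nodup (m + 1)
  omega

theorem nim_pi_formula_general (x k : ℕ)
    (h1 : 2 ^ k ≤ x) (h2 : x < 2 ^ (k + 1)) :
    6 * (piNim ∅ x : ℤ) =
      3 * (x : ℤ) ^ 2 - 6 * (x : ℤ) * 2 ^ k + 4 * ((2 : ℤ) ^ k) ^ 2 + 3 * (x : ℤ) + 2 := by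
  obtain ⟨r, rfl⟩ := Nat.exists_eq_add_of_le h1
  have hr : r ≤ 2 ^ k := by rw [pow_succ] at h2; omega
  have hcount :
      6 * piNim ∅ (2 ^ k + r) = 2 ^ k * 2 ^ k + 3 * (r * r) + 3 * (2 ^ k + r) + 2 := by
    rw [piNim, setOf_pPos_empty_eq_image, Set.ncard_coe_finset,
      six_mul_card_image_xorTriple (by positivity), card_xorPairs_two_pow_add hr]
  zify at hcount
  push_cast
  linear_combination hcount

/-- Explicit formula for π in ordinary Nim: if 2^k is the greatest power of 2 ≤ x,
then π(x) = (3x² − 6x·2^k + 4·(2^k)² + 3x + 2)/6. -/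
theorem nim_pi_formula (x k : ℕ) (hx : 1 ≤ x)
    (h1 : 2 ^ k ≤ x) (h2 : x < 2 ^ (k + 1)) :
    6 * (piNim ∅ x : ℤ) =
      3 * (x : ℤ) ^ 2 - 6 * (x : ℤ) * 2 ^ k + 4 * ((2 : ℤ) ^ k) ^ 2 + 3 * (x : ℤ) + 2 :=
  nim_pi_formula_general x k h1 h2
end

section
/- Given any instance Nim−F of CIS-Nim and any m > n > 4·F_max + 3·|F|, there exists a bijection φ from S_n to S_m such that whenever φ(x1,y1) = (x2,y2), one has x1 − y1 ≥ x2 − y2 and x1 − 2y1 ≥ x2 − 2y2. -/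
open Filter

/-!
Every point `(x, y)` of `S_n` has `y < x`, and once `m > 2·F_max + |F|` every point of `S_m`
has `x ≤ 2y`; below the cut-off this comes from counting P-positions `{x, y, z}` along lines,
at most one per line. On the other hand `S_m` contains the points `(d + 1, d)` for an infinite
doubling chain of `d`'s (with `x − y = 1` and `x − 2y` arbitrarily negative), and `S_n` contains
all `(2y, y)` with `y ≥ n` (with `x − 2y = 0` and `x − y` arbitrarily large). This gives
injections `S_n → S_m` and `S_m → S_n` respecting both inequalities, and the Schröder–Bernstein
construction, which only ever uses one of the two injections at each point, glues them into the
required bijection.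
-/

open Finset

section Nim

variable {F : Finset (Multiset ℕ)} {a b : Multiset ℕ} {x y z u v : ℕ}

theorem nimP_iff : NimP F a ↔ ∀ b, NimMove a b → b ∉ F → ¬ NimP F b := by
  rw [NimP]

theorem PPos.not_nimMove (ha : PPos F a) (hb : PPos F b) : ¬ NimMove a b :=
  fun h ↦ nimP_iff.1 ha.2 b h hb.1 hb.2

theorem triple_comm_left (x y z : ℕ) : ({x, y, z} : Multiset ℕ) = {y, x, z} :=
  Multiset.cons_swap x y {z}

theorem triple_comm_right (x y z : ℕ) : ({x, y, z} : Multiset ℕ) = {x, z, y} :=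
  congrArg (x ::ₘ ·) (Multiset.cons_swap y z 0)

theorem triple_rotate (x y z : ℕ) : ({x, y, z} : Multiset ℕ) = {z, x, y} := by
  rw [triple_comm_right, triple_comm_left]

theorem nimMove_triple (h : u < x) : NimMove {x, y, z} {u, y, z} :=
  ⟨x, u, Multiset.mem_cons_self _ _, h, by simp [Multiset.insert_eq_cons]⟩

theorem NimMove.triple_cases (h : NimMove {x, y, z} b) :
    (∃ u < x, b = {u, y, z}) ∨ (∃ u < y, b = {x, u, z}) ∨ (∃ u < z, b = {x, y, u}) := by
  obtain ⟨w, u, hw, hu, rfl⟩ := h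
  simp only [Multiset.insert_eq_cons, Multiset.mem_cons, Multiset.mem_singleton] at hw
  rcases hw with rfl | rfl | rfl
  · exact Or.inl ⟨u, hu, by simp [Multiset.insert_eq_cons]⟩
  · refine Or.inr (Or.inl ⟨u, hu, ?_⟩)
    rw [triple_comm_left x w, triple_comm_left x u]
    simp [Multiset.insert_eq_cons]
  · refine Or.inr (Or.inr ⟨u, hu, ?_⟩)
    rw [triple_rotate x y w, triple_rotate x y u]
    simp [Multiset.insert_eq_cons]

theorem PPos.fst_eq (hu : PPos F {u, y, z}) (hv : PPos F {v, y, z}) : u = v := by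
  rcases lt_trichotomy u v with h | h | h
  · exact (hv.not_nimMove hu (nimMove_triple h)).elim
  · exact h
  · exact (hu.not_nimMove hv (nimMove_triple h)).elim

theorem PPos.snd_eq (hu : PPos F {x, u, z}) (hv : PPos F {x, v, z}) : u = v := by
  rw [triple_comm_left] at hu hv
  exact hu.fst_eq hv

theorem PPos.exists_of_lt_fst (h : PPos F {x, y, z}) (hs : u < x) (hF : {u, y, z} ∉ F) :
    (∃ v < y, PPos F {u, v, z}) ∨ (∃ v < z, PPos F {u, y, v}) := by
  have hN : ¬ NimP F {u, y, z} := nimP_iff.1 h.2 _ (nimMove_triple hs) hF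
  simp only [nimP_iff (a := {u, y, z}), not_forall, not_not] at hN
  obtain ⟨b, hmove, hbF, hbP⟩ := hN
  rcases hmove.triple_cases with ⟨w, hw, rfl⟩ | ⟨w, hw, rfl⟩ | ⟨w, hw, rfl⟩
  · exact absurd (PPos.fst_eq ⟨hbF, hbP⟩ h) (by omega)
  · exact Or.inl ⟨w, hw, hbF, hbP⟩
  · exact Or.inr ⟨w, hw, hbF, hbP⟩

/-- Each `u < x` with `{u, y, z} ∉ F` is a move away from `{x, y, z}`, so it reaches a P-position
`{u, v, z}` with `v < y` or `{u, y, v}` with `v < z`; distinct `u` give distinct `v`, since a line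
`{·, b, c}` carries at most one P-position. -/
theorem PPos.fst_le (h : PPos F {x, y, z}) :
    x ≤ y + z + #{u ∈ range x | {u, y, z} ∈ F} := by
  classical
  have hfree : #{u ∈ range x | {u, y, z} ∉ F} ≤ #((range y).disjSum (range z)) := by
    refine card_le_card_of_forall_subsingleton
      (fun u w ↦ Sum.elim (fun v ↦ PPos F {u, v, z}) (fun v ↦ PPos F {u, y, v}) w) ?_ ?_
    · intro u hu
      rw [mem_filter, mem_range] at hu
      rcases h.exists_of_lt_fst hu.1 hu.2 with ⟨v, hv, hP⟩ | ⟨v, hv, hP⟩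
      · exact ⟨Sum.inl v, by simpa using hv, hP⟩
      · exact ⟨Sum.inr v, by simpa using hv, hP⟩
    · rintro (v | v) - u₁ ⟨-, h₁⟩ u₂ ⟨-, h₂⟩
      · exact PPos.fst_eq h₁ h₂
      · exact PPos.fst_eq h₁ h₂
  have hsplit :=
    card_filter_add_card_filter_not (s := range x) (fun u ↦ ({u, y, z} : Multiset ℕ) ∈ F)
  rw [card_disjSum, card_range, card_range] at hfree
  rw [card_range] at hsplit
  omega

theorem card_filter_triple_mem_le (x y z : ℕ) :
    #{u ∈ range x | ({u, y, z} : Multiset ℕ) ∈ F} ≤ #F := by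
  refine card_le_card_of_injOn (fun u ↦ ({u, y, z} : Multiset ℕ))
    (fun u hu ↦ (mem_filter.1 hu).2) fun u₁ _ u₂ _ h ↦ ?_
  exact (Multiset.cons_inj_left _).1 h

theorem card_filter_triple_mem_eq_zero (hy : Fmax F < y) (x z : ℕ) :
    #{u ∈ range x | ({u, y, z} : Multiset ℕ) ∈ F} = 0 := by
  refine card_eq_zero.2 (filter_eq_empty_iff.2 fun u _ hu ↦ ?_)
  have : y ≤ Fmax F :=
    (Multiset.le_sup (by simp [Multiset.insert_eq_cons])).trans (le_sup (f := Multiset.sup) hu)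
  omega

end Nim

section Sset

variable {F : Finset (Multiset ℕ)} {x y : ℕ}

theorem snd_lt_of_mem_Sset (h : (x, y) ∈ Sset F) : y < x := h.choose_spec.2.1

theorem not_ppos_of_mem_Sset {s : ℕ} (h : (x, s) ∈ Sset F) (hs : s < y) :
    ¬ PPos F {x, y, s} := by
  obtain ⟨w, hw, -, hP⟩ : ∃ w, w < s ∧ s < x ∧ PPos F {x, s, w} := h
  intro hQ
  rw [triple_comm_right] at hP
  have := hQ.snd_eq hP
  omega

theorem lt_two_mul_of_mem_Sset (hx : 2 * Fmax F + #F < x) (h : (x, y) ∈ Sset F) :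
    x < 2 * y := by
  obtain ⟨z, hz, -, hP⟩ : ∃ z, z < y ∧ y < x ∧ PPos F {x, y, z} := h
  have hle := hP.fst_le
  by_cases hy : Fmax F < y
  · rw [card_filter_triple_mem_eq_zero hy] at hle
    omega
  · have := card_filter_triple_mem_le (F := F) x y z
    omega

theorem rdef_le (hx : 2 * Fmax F + #F < x) (y : ℕ) : rdef F x y ≤ 2 * y - x := by
  calc rdef F x y ≤ (Set.Ico x (2 * y)).ncard :=
        Set.ncard_le_ncard
          (fun x' hx' ↦ ⟨hx'.1, lt_two_mul_of_mem_Sset (hx.trans_le hx'.1) hx'.2⟩)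
          (Set.finite_Ico _ _)
    _ = 2 * y - x := Set.ncard_Ico_nat _ _

theorem two_mul_bdef_self_lt (hx : 2 * Fmax F + #F < x) : 2 * bdef F x x < x := by
  have : bdef F x x ≤ (Set.Ico (x / 2 + 1) x).ncard :=
    Set.ncard_le_ncard
      (fun y' hy' ↦ ⟨by have := lt_two_mul_of_mem_Sset hx hy'.2; omega, snd_lt_of_mem_Sset hy'.2⟩)
      (Set.finite_Ico _ _)
  rw [Set.ncard_Ico_nat] at this
  omega

/-- Each `(x, y) ∈ S` comes with a witness `z < y` such that `{x, y, z}` is a P-position; the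
values `y` and the witnesses `z` are `2 b(x, x)` distinct numbers below `x`. -/
theorem two_mul_bdef_self_le (F : Finset (Multiset ℕ)) (x : ℕ) : 2 * bdef F x x ≤ x := by
  classical
  set T := {y ∈ range x | (x, y) ∈ Sset F}
  have hT : bdef F x x = #T := by
    rw [bdef, ← Set.ncard_coe_finset]
    congr 1
    ext y
    simp only [Set.mem_ofPred_eq, coe_filter, mem_range, T]
    exact ⟨fun h ↦ ⟨snd_lt_of_mem_Sset h.2, h.2⟩, fun h ↦ ⟨h.1.le, h.2⟩⟩
  have hcount : #(T.disjSum T) ≤ #(range x) := by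
    refine card_le_card_of_forall_subsingleton
      (fun w s ↦ Sum.elim (fun y ↦ s = y) (fun y ↦ s < y ∧ PPos F {x, y, s}) w) ?_ ?_
    · rintro (y | y) hy <;> simp only [inl_mem_disjSum, inr_mem_disjSum, mem_filter, mem_range,
        T] at hy
      · exact ⟨y, mem_range.2 hy.1, rfl⟩
      · obtain ⟨z, hz, -, hP⟩ := hy.2
        exact ⟨z, mem_range.2 (by omega), hz, hP⟩
    · rintro s - (y₁ | y₁) ⟨h₁, hr₁⟩ (y₂ | y₂) ⟨h₂, hr₂⟩ <;>
        simp only [Sum.elim_inl, Sum.elim_inr] at hr₁ hr₂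
      · rw [← hr₁, ← hr₂]
      · subst hr₁
        exact (not_ppos_of_mem_Sset (mem_filter.1 (inl_mem_disjSum.1 h₁)).2 hr₂.1 hr₂.2).elim
      · subst hr₂
        exact (not_ppos_of_mem_Sset (mem_filter.1 (inl_mem_disjSum.1 h₂)).2 hr₁.1 hr₁.2).elim
      · rw [PPos.snd_eq hr₁.2 hr₂.2]
  rw [card_disjSum, card_range] at hcount
  omega

end Sset

section Ubar

variable {F : Finset (Multiset ℕ)} {x y : ℕ} {p : ℕ × ℕ}

theorem ubar_iff_of_lt (h : p.2 < x) : Ubar F x y p ↔ p ∈ Uset F x y := by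
  rw [Ubar, if_pos h]

theorem ubar_iff_of_le (h : x ≤ p.2) :
    Ubar F x y p ↔ p.2 < p.1 ∧ p.1 ≤ 2 * p.2 ∧ ¬ Ubar F x y (p.2, p.1 / 2) := by
  rw [Ubar, if_neg (not_lt.2 h)]
  by_cases hp : p.2 < p.1 <;> simp [hp]

theorem mem_Uset_zero_iff : p ∈ Uset F x 0 ↔
    (p.2 < p.1 ∧ p.1 ≤ x ∧ p.1 - p.2 ≤ bdef F p.1 p.1) ∨
      (p.2 < x ∧ x ≤ p.1 ∧ p.1 - x < rdef F x p.2) := by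
  simp [Uset]

end Ubar

section Sn

variable {F : Finset (Multiset ℕ)} {n m y t : ℕ} {p : ℕ × ℕ}

theorem mem_Sn_iff_of_lt (h : p.2 < n) : p ∈ Sn F n ↔
    (p.2 < p.1 ∧ p.1 ≤ n ∧ p.1 - p.2 ≤ bdef F p.1 p.1) ∨
      (p.2 < n ∧ n ≤ p.1 ∧ p.1 - n < rdef F n p.2) :=
  (ubar_iff_of_lt h).trans mem_Uset_zero_iff

theorem mem_Sn_iff_of_le (h : n ≤ p.2) :
    p ∈ Sn F n ↔ p.2 < p.1 ∧ p.1 ≤ 2 * p.2 ∧ (p.2, p.1 / 2) ∉ Sn F n :=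
  ubar_iff_of_le h

theorem snd_lt_fst_of_mem_Sn (h : p ∈ Sn F n) : p.2 < p.1 := by
  rcases lt_or_ge p.2 n with hp | hp
  · rcases (mem_Sn_iff_of_lt hp).1 h with h | h <;> omega
  · exact ((mem_Sn_iff_of_le hp).1 h).1

theorem fst_le_two_mul_snd_of_mem_Sn (hn : 2 * Fmax F + #F < n) (h : p ∈ Sn F n) :
    p.1 ≤ 2 * p.2 := by
  rcases lt_or_ge p.2 n with hp | hp
  · rcases (mem_Sn_iff_of_lt hp).1 h with ⟨-, -, hb⟩ | ⟨-, -, hr⟩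
    · have := two_mul_bdef_self_le F p.1
      omega
    · have := rdef_le hn p.2
      omega
  · exact ((mem_Sn_iff_of_le hp).1 h).2.1

theorem two_mul_mem_Sn (hy : n ≤ y) (hy₀ : 0 < y) : (2 * y, y) ∈ Sn F n := by
  refine (mem_Sn_iff_of_le hy).2 ⟨by simp only; omega, le_rfl, fun h ↦ ?_⟩
  rw [Nat.mul_div_cancel_left _ two_pos] at h
  exact lt_irrefl y ((mem_Sn_iff_of_le hy).1 h).1

theorem two_mul_half_not_mem_Sn (hm : 2 * Fmax F + #F < m) (hm₂ : 2 ≤ m) :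
    (2 * ((m + 1) / 2), (m + 1) / 2) ∉ Sn F m := by
  intro h
  rcases (mem_Sn_iff_of_lt (by simp only; omega)).1 h with ⟨-, hle, hb⟩ | ⟨-, hge, hr⟩
  · have hm' : 2 * ((m + 1) / 2) = m := by simp only at hle; omega
    have := two_mul_bdef_self_lt hm
    simp only [hm'] at hb
    omega
  · have := rdef_le hm ((m + 1) / 2)
    simp only at hge hr
    omega

theorem diag_mem_Sn_iff (hm : m ≤ t + 1) (ht : 0 < t) :
    (2 * t + 2, 2 * t + 1) ∈ Sn F m ↔ (t + 1, t) ∈ Sn F m := by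
  have h₁ : (2 * t + 2) / 2 = t + 1 := by omega
  have h₂ : (2 * t + 1) / 2 = t := by omega
  rw [mem_Sn_iff_of_le (by simp only; omega), mem_Sn_iff_of_le (by simp only; omega)]
  simp only [h₁, h₂, not_and, not_not]
  exact ⟨fun h ↦ h.2.2 (by omega) (by omega), fun h ↦ ⟨by omega, by omega, fun _ _ ↦ h⟩⟩

/-- `(d + 1, d) ∈ S_m` passes from `d` to `2d + 1` through `(2d + 1, d + 1) ∉ S_m`, and holds
for `d = 2⌈m/2⌉` because `(2⌈m/2⌉, ⌈m/2⌉) ∉ S_m`. -/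
def diagSeq (m : ℕ) : ℕ → ℕ
  | 0 => 2 * ((m + 1) / 2)
  | k + 1 => 2 * diagSeq m k + 1

theorem le_diagSeq (m k : ℕ) : m + k ≤ diagSeq m k := by
  induction k with
  | zero => simp only [diagSeq]; omega
  | succ k ih => simp only [diagSeq]; omega

theorem strictMono_diagSeq (m : ℕ) : StrictMono (diagSeq m) :=
  strictMono_nat_of_lt_succ fun k ↦ by simp only [diagSeq]; omega

theorem diag_mem_Sn (hm : 2 * Fmax F + #F < m) (hm₂ : 2 ≤ m) (k : ℕ) :
    (diagSeq m k + 1, diagSeq m k) ∈ Sn F m := by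
  induction k with
  | zero =>
    refine (mem_Sn_iff_of_le (le_diagSeq m 0)).2 ⟨by simp only; omega, ?_, ?_⟩
    · simp only [diagSeq]; omega
    · simpa only [diagSeq, show (2 * ((m + 1) / 2) + 1) / 2 = (m + 1) / 2 by omega]
        using two_mul_half_not_mem_Sn hm hm₂
  | succ k ih =>
    have := le_diagSeq m k
    exact (diag_mem_Sn_iff (by omega) (by omega)).2 ih

end Sn

def Dominates (p q : ℕ × ℕ) : Prop :=
  (q.1 : ℤ) - q.2 ≤ p.1 - p.2 ∧ (q.1 : ℤ) - 2 * q.2 ≤ p.1 - 2 * p.2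

section Injections

variable {F : Finset (Multiset ℕ)} {m : ℕ}

theorem exists_injective_Sn_dominates (hm : 2 * Fmax F + #F < m) (hm₂ : 2 ≤ m) (n : ℕ) :
    ∃ f : Sn F n → Sn F m, Function.Injective f ∧ ∀ p : Sn F n, Dominates p (f p) := by
  let d : Sn F n → ℕ := fun p ↦ diagSeq m (Nat.pair p.1.1 p.1.2)
  refine ⟨fun p ↦ ⟨(d p + 1, d p), diag_mem_Sn hm hm₂ _⟩, fun p q h ↦ ?_, fun p ↦ ?_⟩
  · have hd : d p = d q := congrArg (fun r : Sn F m ↦ r.1.2) h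
    obtain ⟨h₁, h₂⟩ := Nat.pair_eq_pair.1 ((strictMono_diagSeq m).injective hd)
    exact Subtype.ext (Prod.ext h₁ h₂)
  · have := snd_lt_fst_of_mem_Sn p.2
    have := le_diagSeq m (Nat.pair p.1.1 p.1.2)
    have := Nat.right_le_pair p.1.1 p.1.2
    simp only [Dominates, d]
    constructor <;> push_cast <;> omega

theorem exists_injective_dominates_Sn (hm : 2 * Fmax F + #F < m) (n : ℕ) :
    ∃ g : Sn F m → Sn F n, Function.Injective g ∧ ∀ q : Sn F m, Dominates (g q) q := by
  let k : Sn F m → ℕ := fun q ↦ n + Nat.pair q.1.1 q.1.2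
  have hk (q : Sn F m) : q.1.1 ≤ Nat.pair q.1.1 q.1.2 := Nat.left_le_pair _ _
  refine ⟨fun q ↦ ⟨(2 * k q, k q), two_mul_mem_Sn (Nat.le_add_right _ _) ?_⟩,
    fun q r h ↦ ?_, fun q ↦ ?_⟩
  · have := snd_lt_fst_of_mem_Sn q.2
    have := hk q
    simp only [k]
    omega
  · have hkqr : k q = k r := congrArg (fun s : Sn F n ↦ s.1.2) h
    obtain ⟨h₁, h₂⟩ := Nat.pair_eq_pair.1 (Nat.add_left_cancel hkqr)
    exact Subtype.ext (Prod.ext h₁ h₂)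
  · have := fst_le_two_mul_snd_of_mem_Sn hm q.2
    have := hk q
    simp only [Dominates, k]
    constructor <;> push_cast <;> omega

end Injections

/-- For m > n > 4·F_max + 3·|F| there is a bijection φ : S_n → S_m with
x₁ − y₁ ≥ x₂ − y₂ and x₁ − 2y₁ ≥ x₂ − 2y₂ whenever φ(x₁,y₁) = (x₂,y₂). -/
theorem Sn_bijection (F : Finset (Multiset ℕ)) (n m : ℕ)
    (hn : n > 4 * Fmax F + 3 * F.card) (hm : m > n) :
    ∃ φ : Sn F n → Sn F m, Function.Bijective φ ∧
      ∀ p : Sn F n,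
        ((φ p : ℕ × ℕ).1 : ℤ) - ((φ p : ℕ × ℕ).2 : ℤ) ≤
          ((p : ℕ × ℕ).1 : ℤ) - ((p : ℕ × ℕ).2 : ℤ) ∧
        ((φ p : ℕ × ℕ).1 : ℤ) - 2 * ((φ p : ℕ × ℕ).2 : ℤ) ≤
          ((p : ℕ × ℕ).1 : ℤ) - 2 * ((p : ℕ × ℕ).2 : ℤ) := by
  have hm' : 2 * Fmax F + #F < m := by omega
  obtain ⟨f, hf, hfd⟩ := exists_injective_Sn_dominates hm' (by omega) n
  obtain ⟨g, hg, hgd⟩ := exists_injective_dominates_Sn hm' n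
  exact Function.Embedding.schroeder_bernstein_of_rel hf hg (fun p q ↦ Dominates p q) hfd hgd
end
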